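/- Let 𝔸 be a cartesian (strict) monoidal category and h = ⟨α ∣ β⟩_M : (A,A) → (B,B) a homogeneous optic. Then there exist morphisms get : A → B and put : A ⊗ B → A in 𝔸 such that h = ⟨Δ_A(1_A ⊗ get) ∣ put⟩_A, i.e. h has a representative with residual A whose forward part is the copy of A followed by get on the second component and whose backward part is put. Explicitly, get = α ; (!_M ⊗ 1_B) : A → B and put = (α ⊗ 1_B) ; (1_M ⊗ !_B ⊗ 1_B) ; β : A ⊗ B → A work. -/

import Mathlib

open CategoryTheory MonoidalCategory

universe v u

variable (C : Type u) [Category.{v} C] [CartesianMonoidalCategory C]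

/-- A representative of an optic `(A,B) → (X,Y)`: a residual `M`,
a forward part `A ⟶ M ⊗ X` and a backward part `M ⊗ Y ⟶ B`. -/
structure OpticRep (A B X Y : C) where
  M : C
  fwd : A ⟶ M ⊗ X
  bwd : M ⊗ Y ⟶ B

variable {C}

/-- The sliding relation generating the equivalence on optic representatives. -/
inductive OpticRel (A B X Y : C) : OpticRep C A B X Y → OpticRep C A B X Y → Prop
  | slide {M N : C} (f : M ⟶ N) (a : A ⟶ M ⊗ X) (b : N ⊗ Y ⟶ B) :
      OpticRel A B X Y ⟨N, a ≫ (f ▷ X), b⟩ ⟨M, a, (f ▷ Y) ≫ b⟩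

/-- An optic is an equivalence class of representatives. -/
def Optic (A B X Y : C) := Quot (OpticRel A B X Y)

/-- Composition of optic representatives. -/
def OpticRep.comp {A B X Y E F : C} (h : OpticRep C A B X Y) (k : OpticRep C X Y E F) :
    OpticRep C A B E F where
  M := h.M ⊗ k.M
  fwd := h.fwd ≫ (h.M ◁ k.fwd) ≫ (α_ h.M k.M E).inv
  bwd := (α_ h.M k.M F).hom ≫ (h.M ◁ k.bwd) ≫ h.bwd

/-- The identity optic representative `⟨1_A ∣ 1_B⟩_I`. -/
def OpticRep.id (A B : C) : OpticRep C A B A B where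
  M := 𝟙_ C
  fwd := (λ_ A).inv
  bwd := (λ_ B).hom

/-! In a cartesian category the forward part factors as
`a = ⟨1_A, a ≫ snd⟩ ≫ ((a ≫ fst) ⊗ 1_X)`, so one slide along `a ≫ fst : A ⟶ M` moves the residual
from `M` to `A`. -/

section

open CartesianMonoidalCategory

theorem Optic.mk_eq_lens {A B X Y M : C} (a : A ⟶ M ⊗ X) (b : M ⊗ Y ⟶ B) :
    Quot.mk (OpticRel A B X Y) (⟨M, a, b⟩ : OpticRep C A B X Y) =
      Quot.mk (OpticRel A B X Y)
        (⟨A, lift (𝟙 A) (a ≫ snd M X), (a ≫ fst M X) ▷ Y ≫ b⟩ : OpticRep C A B X Y) := by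
  have ha : lift (𝟙 A) (a ≫ snd M X) ≫ (a ≫ fst M X) ▷ X = a := by ext <;> simp
  conv_lhs => rw [← ha]
  exact Quot.sound (.slide _ _ _)

lemma fst_whiskerRight_eq_associator_snd (M B : C) :
    fst M B ▷ B = (α_ M B B).hom ≫ M ◁ snd B B := by
  ext <;> simp

end

open CartesianMonoidalCategory in
/-- In a cartesian monoidal category, every homogeneous optic is a lens: it has a
representative with residual `A`, forward part `Δ_A ≫ (1_A ⊗ get)` and backward part `put`,
where explicitly `get = α ≫ (!_M ⊗ 1_B)` and `put = (α ⊗ 1_B) ≫ (1_M ⊗ !_B ⊗ 1_B) ≫ β`. -/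
theorem homogeneous_optic_is_lens {A B M : C} (a : A ⟶ M ⊗ B) (b : M ⊗ B ⟶ A) :
    ∃ (get : A ⟶ B) (put : A ⊗ B ⟶ A),
      get = a ≫ (toUnit M ▷ B) ≫ (λ_ B).hom ∧
      put = (a ▷ B) ≫ (α_ M B B).hom ≫ (M ◁ ((toUnit B ▷ B) ≫ (λ_ B).hom)) ≫ b ∧
      Quot.mk (OpticRel A A B B) (⟨M, a, b⟩ : OpticRep C A A B B) =
        Quot.mk (OpticRel A A B B)
          (⟨A, lift (𝟙 A) (𝟙 A) ≫ (A ◁ get), put⟩ : OpticRep C A A B B) := by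
  refine ⟨_, _, rfl, rfl, ?_⟩
  rw [Optic.mk_eq_lens]
  simp only [whiskerRight_toUnit_comp_leftUnitor_hom, comp_whiskerRight,
    fst_whiskerRight_eq_associator_snd, lift_whiskerLeft, Category.id_comp, Category.assoc]
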